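/- The lattice of normal subgroups of ZM(m,n,r) contains a sublattice isomorphic to the divisor lattice of n, namely {⟨a, b^{n₁}⟩ : n₁ | n}, with ⟨a, b^{n₁}⟩ ⊆ ⟨a, b^{n₂}⟩ if and only if n₂ | n₁. -/

import Mathlib

def ZMrels (m n : ℕ) (r : ℤ) : Set (FreeGroup Bool) :=
  {FreeGroup.of true ^ m, FreeGroup.of false ^ n,
   (FreeGroup.of false)⁻¹ * FreeGroup.of true * FreeGroup.of false * (FreeGroup.of true) ^ (-r)}

abbrev ZM (m n : ℕ) (r : ℤ) : Type := PresentedGroup (ZMrels m n r)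

def ZMa (m n : ℕ) (r : ℤ) : ZM m n r := PresentedGroup.of true

def ZMb (m n : ℕ) (r : ℤ) : ZM m n r := PresentedGroup.of false

/-! For `d ∣ n`, sending `a ↦ 0` and `b ↦ 1` defines a homomorphism `ZM m n r → ℤ/d`, and
`⟨a, b^d⟩` is exactly its kernel: conjugation by `b` preserves `⟨a⟩` (using `b^n = 1` for
`b a b⁻¹`), so every element is `a^i b^k`, and such an element lies in `⟨a, b^d⟩` iff `d ∣ k`.
Hence these subgroups are normal, and inclusion, meet and join correspond to divisibility,
`lcm` and `gcd` (the join via Bézout). -/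

open Subgroup

section

variable {G : Type*} [Group G]

theorem pow_inv_mul_mul_pow_eq_zpow {a b : G} {r : ℤ} (h : b⁻¹ * a * b = a ^ r) (j : ℕ) :
    (b ^ j)⁻¹ * a * b ^ j = a ^ r ^ j := by
  induction j with
  | zero => simp
  | succ j ih =>
    calc (b ^ (j + 1))⁻¹ * a * b ^ (j + 1) = b⁻¹ * ((b ^ j)⁻¹ * a * b ^ j) * b⁻¹⁻¹ := by group
      _ = (b⁻¹ * a * b) ^ r ^ j := by rw [ih, ← conj_zpow, inv_inv]
      _ = a ^ r ^ (j + 1) := by rw [h, ← zpow_mul, pow_succ']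

theorem mul_mul_inv_mem_zpowers {a b : G} {r : ℤ} (h : b⁻¹ * a * b = a ^ r) {n : ℕ}
    (hn : 0 < n) (hb : b ^ n = 1) : b * a * b⁻¹ ∈ zpowers a := by
  have hb_inv : b⁻¹ = b ^ (n - 1) :=
    inv_eq_of_mul_eq_one_right (by rw [← pow_succ', Nat.sub_add_cancel hn, hb])
  have := pow_inv_mul_mul_pow_eq_zpow h (n - 1)
  rw [← hb_inv, inv_inv] at this
  exact mem_zpowers_iff.mpr ⟨_, this.symm⟩

theorem mem_normalizer_zpowers_of_conj_mem {a g : G} (h₁ : g * a * g⁻¹ ∈ zpowers a)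
    (h₂ : g⁻¹ * a * g ∈ zpowers a) : g ∈ normalizer (zpowers a : Set G) := by
  refine mem_normalizer_iff.mpr fun x => ⟨fun hx => ?_, fun hx => ?_⟩
  · obtain ⟨i, rfl⟩ := mem_zpowers_iff.mp hx
    simpa only [conj_zpow] using zpow_mem h₁ i
  · obtain ⟨i, hi⟩ := mem_zpowers_iff.mp hx
    have hx' : x = g⁻¹ * (g * x * g⁻¹) * g⁻¹⁻¹ := by group
    rw [hx', ← hi, ← conj_zpow, inv_inv]
    exact zpow_mem h₂ i

theorem zpowers_normal_of_closure_pair_eq_top {a b : G} (hG : Subgroup.closure {a, b} = ⊤)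
    (h₁ : b * a * b⁻¹ ∈ zpowers a) (h₂ : b⁻¹ * a * b ∈ zpowers a) : (zpowers a).Normal := by
  rw [← normalizer_eq_top_iff, eq_top_iff, ← hG, closure_le]
  rintro g (rfl | rfl)
  · exact le_normalizer (mem_zpowers g)
  · exact mem_normalizer_zpowers_of_conj_mem h₁ h₂

theorem exists_zpow_mul_zpow_eq {a b : G} (hG : Subgroup.closure {a, b} = ⊤)
    [(zpowers a).Normal] (g : G) : ∃ i k : ℤ, a ^ i * b ^ k = g := by
  have hsup : zpowers a ⊔ zpowers b = ⊤ := by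
    rw [zpowers_eq_closure, zpowers_eq_closure, ← Subgroup.closure_union, Set.singleton_union, hG]
  have hg : g ∈ ((zpowers a ⊔ zpowers b : Subgroup G) : Set G) := by
    rw [hsup]; trivial
  rw [normal_mul] at hg
  obtain ⟨x, hx, y, hy, rfl⟩ := hg
  obtain ⟨i, rfl⟩ := mem_zpowers_iff.mp hx
  obtain ⟨k, rfl⟩ := mem_zpowers_iff.mp hy
  exact ⟨i, k, rfl⟩

theorem mem_closure_pair_left (a c : G) : a ∈ Subgroup.closure {a, c} :=
  Subgroup.subset_closure (Set.mem_insert a _)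

theorem mem_closure_pair_right (a c : G) : c ∈ Subgroup.closure {a, c} :=
  Subgroup.subset_closure (Set.mem_insert_of_mem a (Set.mem_singleton c))

theorem closure_pair_pow_le_of_dvd (a b : G) {d e : ℕ} (h : e ∣ d) :
    Subgroup.closure {a, b ^ d} ≤ Subgroup.closure {a, b ^ e} := by
  obtain ⟨c, rfl⟩ := h
  rw [closure_le]
  rintro x (rfl | rfl)
  · exact mem_closure_pair_left _ _
  · rw [SetLike.mem_coe, pow_mul]
    exact pow_mem (mem_closure_pair_right _ _) c

theorem closure_pair_pow_gcd_le_sup (a b : G) (d e : ℕ) :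
    Subgroup.closure {a, b ^ d.gcd e} ≤
      Subgroup.closure {a, b ^ d} ⊔ Subgroup.closure {a, b ^ e} := by
  rw [closure_le]
  rintro x (rfl | rfl)
  · exact mem_sup_left (mem_closure_pair_left _ _)
  · have hbezout : b ^ d.gcd e = (b ^ d) ^ d.gcdA e * (b ^ e) ^ d.gcdB e := by
      rw [← zpow_natCast, Nat.gcd_eq_gcd_ab, zpow_add, zpow_mul, zpow_mul, zpow_natCast,
        zpow_natCast]
    rw [SetLike.mem_coe, hbezout]
    exact mul_mem (mem_sup_left (zpow_mem (mem_closure_pair_right _ _) _))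
      (mem_sup_right (zpow_mem (mem_closure_pair_right _ _) _))

end

namespace ZM

variable {m n : ℕ} {r : ℤ}

theorem ZMb_pow : ZMb m n r ^ n = 1 :=
  PresentedGroup.one_of_mem (by simp [ZMrels])

theorem ZMb_inv_mul_ZMa_mul_ZMb : (ZMb m n r)⁻¹ * ZMa m n r * ZMb m n r = ZMa m n r ^ r := by
  have h : (ZMb m n r)⁻¹ * ZMa m n r * ZMb m n r * ZMa m n r ^ (-r) = 1 :=
    PresentedGroup.one_of_mem (by simp [ZMrels])
  rwa [zpow_neg, mul_inv_eq_one] at h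

theorem closure_ZMa_ZMb : Subgroup.closure {ZMa m n r, ZMb m n r} = ⊤ := by
  rw [← PresentedGroup.closure_range_of]
  congr
  ext x
  simp [ZMa, ZMb, or_comm]

theorem zpowers_ZMa_normal (hn : 0 < n) : (zpowers (ZMa m n r)).Normal :=
  zpowers_normal_of_closure_pair_eq_top closure_ZMa_ZMb
    (mul_mul_inv_mem_zpowers ZMb_inv_mul_ZMa_mul_ZMb hn ZMb_pow)
    (mem_zpowers_iff.mpr ⟨r, ZMb_inv_mul_ZMa_mul_ZMb.symm⟩)

def toZMod {d : ℕ} (hd : d ∣ n) : ZM m n r →* Multiplicative (ZMod d) :=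
  PresentedGroup.toGroup (f := fun x => bif x then 1 else Multiplicative.ofAdd 1) <| by
    simp only [ZMrels, Set.mem_insert_iff, Set.mem_singleton_iff]
    rintro x (rfl | rfl | rfl)
    · simp
    · simp [← ofAdd_nsmul, (ZMod.natCast_eq_zero_iff n d).mpr hd]
    · simp

theorem toZMod_zpow_mul_zpow {d : ℕ} (hd : d ∣ n) (i k : ℤ) :
    toZMod (r := r) hd (ZMa m n r ^ i * ZMb m n r ^ k) = Multiplicative.ofAdd (k : ZMod d) := by
  simp [toZMod, ZMa, ZMb, PresentedGroup.toGroup.of, ← ofAdd_zsmul]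

theorem zpow_mul_zpow_mem_ker_toZMod_iff {d : ℕ} (hd : d ∣ n) (i k : ℤ) :
    ZMa m n r ^ i * ZMb m n r ^ k ∈ (toZMod hd).ker ↔ (d : ℤ) ∣ k := by
  rw [MonoidHom.mem_ker, toZMod_zpow_mul_zpow, ofAdd_eq_one, ZMod.intCast_zmod_eq_zero_iff_dvd]

theorem closure_ZMa_ZMb_pow_eq_ker (hn : 0 < n) {d : ℕ} (hd : d ∣ n) :
    Subgroup.closure {ZMa m n r, ZMb m n r ^ d} = (toZMod hd).ker := by
  refine le_antisymm ?_ fun g hg => ?_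
  · rw [closure_le]
    rintro x (rfl | rfl)
    · simpa using (zpow_mul_zpow_mem_ker_toZMod_iff (r := r) hd 1 0).mpr (dvd_zero _)
    · simpa using (zpow_mul_zpow_mem_ker_toZMod_iff (r := r) hd 0 d).mpr dvd_rfl
  · have := zpowers_ZMa_normal (m := m) (r := r) hn
    obtain ⟨i, k, rfl⟩ := exists_zpow_mul_zpow_eq closure_ZMa_ZMb g
    obtain ⟨t, rfl⟩ := (zpow_mul_zpow_mem_ker_toZMod_iff hd i k).mp hg
    rw [zpow_mul, zpow_natCast]
    exact mul_mem (zpow_mem (mem_closure_pair_left _ _) i)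
      (zpow_mem (mem_closure_pair_right _ _) t)

theorem ZMb_pow_mem_closure_iff (hn : 0 < n) {d : ℕ} (hd : d ∣ n) (k : ℕ) :
    ZMb m n r ^ k ∈ Subgroup.closure {ZMa m n r, ZMb m n r ^ d} ↔ d ∣ k := by
  rw [closure_ZMa_ZMb_pow_eq_ker hn hd, ← Int.natCast_dvd_natCast,
    ← zpow_mul_zpow_mem_ker_toZMod_iff hd 0, zpow_zero, one_mul, zpow_natCast]

theorem closure_inf_closure_le_closure_lcm (hn : 0 < n) {d e : ℕ} (hd : d ∣ n) (he : e ∣ n) :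
    Subgroup.closure {ZMa m n r, ZMb m n r ^ d} ⊓ Subgroup.closure {ZMa m n r, ZMb m n r ^ e} ≤
      Subgroup.closure {ZMa m n r, ZMb m n r ^ d.lcm e} := by
  have := zpowers_ZMa_normal (m := m) (r := r) hn
  rw [closure_ZMa_ZMb_pow_eq_ker hn hd, closure_ZMa_ZMb_pow_eq_ker hn he,
    closure_ZMa_ZMb_pow_eq_ker hn (Nat.lcm_dvd hd he)]
  intro g hg
  obtain ⟨hgd, hge⟩ := mem_inf.mp hg
  obtain ⟨i, k, rfl⟩ := exists_zpow_mul_zpow_eq closure_ZMa_ZMb g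
  rw [zpow_mul_zpow_mem_ker_toZMod_iff] at hgd hge ⊢
  exact Int.natCast_dvd.mpr (Nat.lcm_dvd (Int.natCast_dvd.mp hgd) (Int.natCast_dvd.mp hge))

end ZM

theorem stmt12_general (m n : ℕ) (r : ℤ) (hn : 0 < n) :
    (∀ n₁ : ℕ, n₁ ∣ n →
      (Subgroup.closure {ZMa m n r, ZMb m n r ^ n₁} : Subgroup (ZM m n r)).Normal) ∧
    (∀ n₁ n₂ : ℕ, n₁ ∣ n → n₂ ∣ n →
      ((Subgroup.closure {ZMa m n r, ZMb m n r ^ n₁} : Subgroup (ZM m n r)) ≤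
          Subgroup.closure {ZMa m n r, ZMb m n r ^ n₂} ↔ n₂ ∣ n₁)) ∧
    (∀ n₁ n₂ : ℕ, n₁ ∣ n → n₂ ∣ n →
      (Subgroup.closure {ZMa m n r, ZMb m n r ^ n₁} : Subgroup (ZM m n r)) ⊔
          Subgroup.closure {ZMa m n r, ZMb m n r ^ n₂}
        = Subgroup.closure {ZMa m n r, ZMb m n r ^ Nat.gcd n₁ n₂}) ∧
    (∀ n₁ n₂ : ℕ, n₁ ∣ n → n₂ ∣ n →
      (Subgroup.closure {ZMa m n r, ZMb m n r ^ n₁} : Subgroup (ZM m n r)) ⊓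
          Subgroup.closure {ZMa m n r, ZMb m n r ^ n₂}
        = Subgroup.closure {ZMa m n r, ZMb m n r ^ Nat.lcm n₁ n₂}) := by
  have mono := @closure_pair_pow_le_of_dvd _ _ (ZMa m n r) (ZMb m n r)
  refine ⟨fun n₁ h₁ => ?_, fun n₁ n₂ _ h₂ => ⟨fun hle => ?_, mono⟩,
    fun n₁ n₂ _ _ => ?_, fun n₁ n₂ h₁ h₂ => ?_⟩
  · rw [ZM.closure_ZMa_ZMb_pow_eq_ker hn h₁]
    infer_instance
  · exact (ZM.ZMb_pow_mem_closure_iff hn h₂ n₁).mp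
      (hle (mem_closure_pair_right _ _))
  · exact le_antisymm (sup_le (mono (Nat.gcd_dvd_left n₁ n₂)) (mono (Nat.gcd_dvd_right n₁ n₂)))
      (closure_pair_pow_gcd_le_sup _ _ n₁ n₂)
  · exact le_antisymm (ZM.closure_inf_closure_le_closure_lcm hn h₁ h₂)
      (le_inf (mono (Nat.dvd_lcm_left n₁ n₂)) (mono (Nat.dvd_lcm_right n₁ n₂)))

theorem stmt12 (m n : ℕ) (r : ℤ) (hm : 0 < m) (hn : 0 < n)
    (hco : Nat.Coprime m n) (hco2 : IsCoprime (m : ℤ) (r - 1))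
    (hr : (m : ℤ) ∣ r ^ n - 1) :
    (∀ n₁ : ℕ, n₁ ∣ n →
      (Subgroup.closure {ZMa m n r, ZMb m n r ^ n₁} : Subgroup (ZM m n r)).Normal) ∧
    (∀ n₁ n₂ : ℕ, n₁ ∣ n → n₂ ∣ n →
      ((Subgroup.closure {ZMa m n r, ZMb m n r ^ n₁} : Subgroup (ZM m n r)) ≤
          Subgroup.closure {ZMa m n r, ZMb m n r ^ n₂} ↔ n₂ ∣ n₁)) ∧
    (∀ n₁ n₂ : ℕ, n₁ ∣ n → n₂ ∣ n →
      (Subgroup.closure {ZMa m n r, ZMb m n r ^ n₁} : Subgroup (ZM m n r)) ⊔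
          Subgroup.closure {ZMa m n r, ZMb m n r ^ n₂}
        = Subgroup.closure {ZMa m n r, ZMb m n r ^ Nat.gcd n₁ n₂}) ∧
    (∀ n₁ n₂ : ℕ, n₁ ∣ n → n₂ ∣ n →
      (Subgroup.closure {ZMa m n r, ZMb m n r ^ n₁} : Subgroup (ZM m n r)) ⊓
          Subgroup.closure {ZMa m n r, ZMb m n r ^ n₂}
        = Subgroup.closure {ZMa m n r, ZMb m n r ^ Nat.lcm n₁ n₂}) :=
  stmt12_general m n r hn
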